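/- Let n ≥ 1 and d ≥ 1 be natural numbers and A, B : Fin n → Fin d → Bool, and assume every vector is nonzero: for each i there exists k with A(i)(k) = true, and for each i there exists k with B(i)(k) = true. Define the simple graph G′ on (Fin n) ⊕ (Fin n) ⊕ (Fin d) ⊕ (Fin 2), writing a_i, b_i, c_j for the vertices of the first three summands and y_a, y_b for the two vertices of the last summand, with exactly the following edges: y_a–a_i for all i; y_a–c_j for all j; y_b–b_i for all i; y_b–c_j for all j; a_i–c_j iff A(i)(j) = true; b_i–c_j iff B(i)(j) = true. Then: (1) edist_{G′}(u,v) ≤ 3 for all vertices u, v of G′; and (2) edist_{G′}(u,v) ≤ 2 for all vertices u, v of G′ if and only if for all i, j ∈ Fin n there exists k ∈ Fin d with A(i)(k) = true and B(j)(k) = true. Here edist denotes shortest-path distance in ℕ∞. -/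

import Mathlib

/-- The Orthogonal-Vectors-to-sparse-diameter gadget graph: vertices
`a_i = inl i`, `b_i = inr (inl i)`, `c_j = inr (inr (inl j))`,
`y_a = inr (inr (inr 0))`, `y_b = inr (inr (inr 1))`; edges `y_a–a_i`,
`y_a–c_j`, `y_b–b_i`, `y_b–c_j`, `a_i–c_j` iff `A i j`, `b_i–c_j` iff
`B i j`. -/
def ovGraph (n d : ℕ) (A B : Fin n → Fin d → Bool) :
    SimpleGraph (Fin n ⊕ Fin n ⊕ Fin d ⊕ Fin 2) :=
  SimpleGraph.fromRel (fun a b =>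
    match a, b with
    | Sum.inl i, Sum.inr (Sum.inr (Sum.inl j)) => A i j = true
    | Sum.inr (Sum.inl i), Sum.inr (Sum.inr (Sum.inl j)) => B i j = true
    | Sum.inr (Sum.inr (Sum.inr y)), Sum.inl _ => y = 0
    | Sum.inr (Sum.inr (Sum.inr y)), Sum.inr (Sum.inl _) => y = 1
    | Sum.inr (Sum.inr (Sum.inr _)), Sum.inr (Sum.inr (Sum.inl _)) => True
    | _, _ => False)

/-!
Apart from the pairs `a_i, b_j`, any two vertices lie in the closed neighbourhood of a single
vertex: a hub `y_a` or `y_b`, or a coordinate vertex `c_k`, where for `a_i` or `b_i` the index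
`k` is a true coordinate of its nonzero vector. The only candidates for a common neighbour of `a_i` and `b_j` are the
`c_k`, and `c_k` is one exactly when `A i k = B j k = true`; the path `a_i – c_k – y_b – b_j`
always has length 3.
-/

namespace SimpleGraph

variable {V : Type*} {G : SimpleGraph V} {u v w x : V}

lemma edist_le_two_of_adj_of_adj (huw : G.Adj u w) (hwv : G.Adj w v) : G.edist u v ≤ 2 := by
  simpa using (huw.toWalk.concat hwv).edist_le

lemma edist_le_three_of_adj_of_adj_of_adj (huw : G.Adj u w) (hwx : G.Adj w x) (hxv : G.Adj x v) :
    G.edist u v ≤ 3 := by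
  simpa using ((huw.toWalk.concat hwx).concat hxv).edist_le

lemma edist_le_two_iff_exists_adj_adj (hne : u ≠ v) (hadj : ¬G.Adj u v) :
    G.edist u v ≤ 2 ↔ ∃ w, G.Adj u w ∧ G.Adj w v := by
  rw [← not_lt, two_lt_edist_iff, ← Set.not_nonempty_iff_eq_empty]
  simp [hne, hadj, Set.Nonempty, mem_commonNeighbors, G.adj_comm v]

lemma edist_eq_of_sym2_eq (h : s(u, v) = s(w, x)) : G.edist u v = G.edist w x := by
  obtain ⟨rfl, rfl⟩ | ⟨rfl, rfl⟩ := Sym2.eq_iff.1 h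
  exacts [rfl, edist_comm]

end SimpleGraph

namespace ovGraph

open SimpleGraph

variable {n d : ℕ} {A B : Fin n → Fin d → Bool}

lemma adj_ya_a (i : Fin n) : (ovGraph n d A B).Adj (.inr (.inr (.inr 0))) (.inl i) := by
  simp [ovGraph]

lemma adj_yb_b (i : Fin n) : (ovGraph n d A B).Adj (.inr (.inr (.inr 1))) (.inr (.inl i)) := by
  simp [ovGraph]

lemma adj_y_c (y : Fin 2) (k : Fin d) :
    (ovGraph n d A B).Adj (.inr (.inr (.inr y))) (.inr (.inr (.inl k))) := by
  simp [ovGraph]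

lemma adj_a_c {i : Fin n} {k : Fin d} (h : A i k = true) :
    (ovGraph n d A B).Adj (.inl i) (.inr (.inr (.inl k))) := by
  simp [ovGraph, h]

lemma adj_b_c {i : Fin n} {k : Fin d} (h : B i k = true) :
    (ovGraph n d A B).Adj (.inr (.inl i)) (.inr (.inr (.inl k))) := by
  simp [ovGraph, h]

lemma exists_adj_a_adj_b_iff (i j : Fin n) :
    (∃ w, (ovGraph n d A B).Adj (.inl i) w ∧ (ovGraph n d A B).Adj w (.inr (.inl j))) ↔
      ∃ k, A i k = true ∧ B j k = true := by
  constructor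
  · rintro ⟨_ | _ | k | y, h1, h2⟩ <;> simp [ovGraph] at h1 h2
    · exact ⟨k, h1, h2⟩
    · simp [h1] at h2
  · rintro ⟨k, hA, hB⟩
    exact ⟨_, adj_a_c hA, (adj_b_c hB).symm⟩

lemma edist_a_b_le_two_iff (i j : Fin n) :
    (ovGraph n d A B).edist (.inl i) (.inr (.inl j)) ≤ 2 ↔ ∃ k, A i k = true ∧ B j k = true := by
  rw [edist_le_two_iff_exists_adj_adj (by simp) (by simp [ovGraph]), exists_adj_a_adj_b_iff]

lemma edist_a_b_le_three {i : Fin n} (hA : ∃ k, A i k = true) (j : Fin n) :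
    (ovGraph n d A B).edist (.inl i) (.inr (.inl j)) ≤ 3 := by
  obtain ⟨k, hk⟩ := hA
  exact edist_le_three_of_adj_of_adj_of_adj (adj_a_c hk) (adj_y_c 1 k).symm (adj_yb_b j)

lemma edist_le_two_or_sym2_eq_a_b (hd : 1 ≤ d) (hA : ∀ i, ∃ k, A i k = true)
    (hB : ∀ i, ∃ k, B i k = true) (u v : Fin n ⊕ Fin n ⊕ Fin d ⊕ Fin 2) :
    (ovGraph n d A B).edist u v ≤ 2 ∨ ∃ i j, s(u, v) = s(.inl i, .inr (.inl j)) := by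
  have adj_le_two {u v} (h : (ovGraph n d A B).Adj u v) : (ovGraph n d A B).edist u v ≤ 2 :=
    (edist_le_one_iff_adj_or_eq.2 (.inl h)).trans one_le_two
  rcases u with i | i | k | y <;> rcases v with i' | i' | k' | y'
  · exact .inl (edist_le_two_of_adj_of_adj (adj_ya_a i).symm (adj_ya_a i'))
  · exact .inr ⟨i, i', rfl⟩
  · exact .inl (edist_le_two_of_adj_of_adj (adj_ya_a i).symm (adj_y_c 0 k'))
  · obtain ⟨k, hk⟩ := hA i
    exact .inl (edist_le_two_of_adj_of_adj (adj_a_c hk) (adj_y_c y' k).symm)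
  · exact .inr ⟨i', i, Sym2.eq_swap⟩
  · exact .inl (edist_le_two_of_adj_of_adj (adj_yb_b i).symm (adj_yb_b i'))
  · exact .inl (edist_le_two_of_adj_of_adj (adj_yb_b i).symm (adj_y_c 1 k'))
  · obtain ⟨k, hk⟩ := hB i
    exact .inl (edist_le_two_of_adj_of_adj (adj_b_c hk) (adj_y_c y' k).symm)
  · exact .inl (edist_le_two_of_adj_of_adj (adj_y_c 0 k).symm (adj_ya_a i'))
  · exact .inl (edist_le_two_of_adj_of_adj (adj_y_c 1 k).symm (adj_yb_b i'))
  · exact .inl (edist_le_two_of_adj_of_adj (adj_y_c 0 k).symm (adj_y_c 0 k'))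
  · exact .inl (adj_le_two (adj_y_c y' k).symm)
  · obtain ⟨k, hk⟩ := hA i'
    exact .inl (edist_le_two_of_adj_of_adj (adj_y_c y k) (adj_a_c hk).symm)
  · obtain ⟨k, hk⟩ := hB i'
    exact .inl (edist_le_two_of_adj_of_adj (adj_y_c y k) (adj_b_c hk).symm)
  · exact .inl (adj_le_two (adj_y_c y k'))
  · exact .inl (edist_le_two_of_adj_of_adj (adj_y_c y ⟨0, hd⟩) (adj_y_c y' ⟨0, hd⟩).symm)

end ovGraph

open SimpleGraph ovGraph in
theorem stmt_18_general (n d : ℕ) (hd : 1 ≤ d)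
    (A B : Fin n → Fin d → Bool)
    (hA : ∀ i : Fin n, ∃ k : Fin d, A i k = true)
    (hB : ∀ i : Fin n, ∃ k : Fin d, B i k = true) :
    (∀ u v : Fin n ⊕ Fin n ⊕ Fin d ⊕ Fin 2,
        (ovGraph n d A B).edist u v ≤ 3) ∧
    ((∀ u v : Fin n ⊕ Fin n ⊕ Fin d ⊕ Fin 2,
        (ovGraph n d A B).edist u v ≤ 2) ↔
      ∀ i j : Fin n, ∃ k : Fin d, A i k = true ∧ B j k = true) := by
  refine ⟨fun u v => ?_, fun h i j => (edist_a_b_le_two_iff i j).1 (h _ _), fun h u v => ?_⟩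
  all_goals
    obtain huv | ⟨i, j, huv⟩ := edist_le_two_or_sym2_eq_a_b hd hA hB u v
  · exact huv.trans (by norm_num)
  · exact (edist_eq_of_sym2_eq huv).trans_le (edist_a_b_le_three (hA i) j)
  · exact huv
  · exact (edist_eq_of_sym2_eq huv).trans_le ((edist_a_b_le_two_iff i j).2 (h i j))

theorem stmt_18 (n d : ℕ) (hn : 1 ≤ n) (hd : 1 ≤ d)
    (A B : Fin n → Fin d → Bool)
    (hA : ∀ i : Fin n, ∃ k : Fin d, A i k = true)
    (hB : ∀ i : Fin n, ∃ k : Fin d, B i k = true) :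
    (∀ u v : Fin n ⊕ Fin n ⊕ Fin d ⊕ Fin 2,
        (ovGraph n d A B).edist u v ≤ 3) ∧
    ((∀ u v : Fin n ⊕ Fin n ⊕ Fin d ⊕ Fin 2,
        (ovGraph n d A B).edist u v ≤ 2) ↔
      ∀ i j : Fin n, ∃ k : Fin d, A i k = true ∧ B j k = true) :=
  stmt_18_general n d hd A B hA hB
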